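/- arXiv:1006.2610 — 2 statements merged into one kernel-verified Lean document; each statement's English description precedes it below -/
import Mathlib

section
/- Let t = (x₀, x₀) be a singular point of h with x₀ in an algebraic closure K of F_p, let μ = m_t(h) be its multiplicity, and for each j let H_j and F_j denote the homogeneous components of total degree j of h(X+x₀, Y+x₀) and f(X+x₀, Y+x₀) in K[X,Y]. Then F_{μ+1} = (X−Y)·H_μ and F_{μ+2} = (X−Y)·H_{μ+1}; moreover there is a constant a ∈ K with F_{μ+1} = a·(X^{μ+1} − Y^{μ+1}), so that every linear factor of H_μ (i.e. every tangent line of h at t) divides (X^{μ+1} − Y^{μ+1})/(X−Y). -/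
open MvPolynomial

/-- `f(x,y) = (x+1)^m - x^m - (y+1)^m + y^m` in `F_p[x,y]`. -/
noncomputable def fpoly (p m : ℕ) : MvPolynomial (Fin 2) (ZMod p) :=
  (X 0 + 1) ^ m - X 0 ^ m - (X 1 + 1) ^ m + X 1 ^ m

/-- The polynomial `g(X + a, Y + b)`, i.e. `g` translated so that `(a,b)` becomes the
origin. -/
noncomputable def shiftAt {K : Type*} [CommRing K] (g : MvPolynomial (Fin 2) K) (a b : K) :
    MvPolynomial (Fin 2) K :=
  MvPolynomial.aeval (fun i : Fin 2 => MvPolynomial.X i + MvPolynomial.C (![a, b] i)) g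

/-- The multiplicity of `g` at the point `(a,b)` : the least `n` such that the homogeneous
component of degree `n` of `g(X+a, Y+b)` is nonzero. -/
noncomputable def multAt {K : Type*} [CommRing K] (g : MvPolynomial (Fin 2) K) (a b : K) : ℕ :=
  sInf {n : ℕ | MvPolynomial.homogeneousComponent n (shiftAt g a b) ≠ 0}

/-- `(a,b)` is a singular point of `g` : `g` and both its partial derivatives
vanish at `(a,b)`. -/
def IsSingAt {K : Type*} [CommRing K] (g : MvPolynomial (Fin 2) K) (a b : K) : Prop :=
  MvPolynomial.eval ![a, b] g = 0 ∧
  MvPolynomial.eval ![a, b] (MvPolynomial.pderiv 0 g) = 0 ∧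
  MvPolynomial.eval ![a, b] (MvPolynomial.pderiv 1 g) = 0

/-- Base change of a two-variable polynomial over `F_p` to the algebraic closure. -/
noncomputable def toK (p : ℕ) [Fact p.Prime] (g : MvPolynomial (Fin 2) (ZMod p)) :
    MvPolynomial (Fin 2) (AlgebraicClosure (ZMod p)) :=
  MvPolynomial.map (algebraMap (ZMod p) (AlgebraicClosure (ZMod p))) g

/-!
Translating along the diagonal fixes `X - Y`, so `f = (X - Y) h` gives
`F_{j+1} = (X - Y) H_j` for every `j`. The binomial theorem computes the components of `f`
exactly: `F_n = C(m,n) ((x₀+1)^(m-n) - x₀^(m-n)) (X^n - Y^n)`. Cancelling `X - Y` in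
`F_{μ+1} = (X - Y) H_μ` shows that `H_μ` is a scalar multiple of `Σ X^i Y^(μ-i)`, and the scalar
is nonzero because `H_μ ≠ 0`; this needs `h ≠ 0`, which holds since the coefficient of `x^(m-1)`
in `f(x, 0)` is `m = 1` in `F_p`.
-/

attribute [local instance] MvPolynomial.gradedAlgebra in
theorem homogeneousComponent_add_mul_of_isHomogeneous {σ R : Type*} [CommSemiring R]
    {g : MvPolynomial σ R} {d : ℕ} (hg : g.IsHomogeneous d) (φ : MvPolynomial σ R) (n : ℕ) :
    homogeneousComponent (d + n) (g * φ) = g * homogeneousComponent n φ := by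
  rw [← decomposition.decompose'_apply, ← decomposition.decompose'_apply]
  exact DirectSum.coe_decompose_mul_add_of_left_mem (homogeneousSubmodule σ R) hg

theorem homogeneousComponent_X_add_C_pow {σ R : Type*} [CommSemiring R] (i : σ) (a : R)
    (m n : ℕ) :
    homogeneousComponent n ((X i + C a) ^ m) = C (m.choose n * a ^ (m - n)) * X i ^ n := by
  have hterm (k : ℕ) : homogeneousComponent n (C (m.choose k * a ^ (m - k)) * X i ^ k) =
      if n = k then C (m.choose k * a ^ (m - k)) * X i ^ k else 0 := by
    rw [homogeneousComponent_C_mul, homogeneousComponent_of_mem ((isHomogeneous_X R i).pow k),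
      one_mul, mul_ite, mul_zero]
  have hexp : (X i + C a) ^ m =
      ∑ k ∈ Finset.range (m + 1), C (m.choose k * a ^ (m - k)) * X i ^ k := by
    rw [add_pow]
    refine Finset.sum_congr rfl fun k _ => ?_
    rw [C_mul, C_pow, ← C_eq_coe_nat]
    ring
  rw [hexp, map_sum, Finset.sum_congr rfl fun k _ => hterm k, Finset.sum_ite_eq]
  split_ifs with hn
  · rfl
  · simp [Nat.choose_eq_zero_of_lt (by simpa using hn : m < n)]

theorem eq_C_mul_geom_sum_of_X_sub_X_mul_eq {σ R : Type*} [CommRing R] [IsDomain R]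
    {i j : σ} (hij : i ≠ j) {P : MvPolynomial σ R} {a : R} {n : ℕ}
    (hP : (X i - X j) * P = C a * (X i ^ (n + 1) - X j ^ (n + 1))) :
    P = C a * ∑ k ∈ Finset.range (n + 1), X i ^ k * X j ^ (n - k) := by
  have hXij : (X i - X j : MvPolynomial σ R) ≠ 0 := sub_ne_zero.mpr ((X_injective).ne hij)
  refine mul_left_cancel₀ hXij (hP.trans ?_)
  rw [← geom_sum₂_mul]
  simp only [add_tsub_cancel_right]
  ring

section Shift

variable {K : Type*} [CommRing K]

theorem shiftAt_shiftAt_neg (g : MvPolynomial (Fin 2) K) (a b : K) :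
    shiftAt (shiftAt g a b) (-a) (-b) = g := by
  rw [shiftAt, shiftAt, comp_aeval_apply]
  convert aeval_X_left_apply g with i
  fin_cases i <;> simp

theorem shiftAt_ne_zero {g : MvPolynomial (Fin 2) K} (hg : g ≠ 0) (a b : K) :
    shiftAt g a b ≠ 0 := by
  intro h0
  apply hg
  rw [← shiftAt_shiftAt_neg g a b, h0, shiftAt, map_zero]

theorem shiftAt_X_sub_X_mul (g : MvPolynomial (Fin 2) K) (a : K) :
    shiftAt ((X 0 - X 1) * g) a a = (X 0 - X 1) * shiftAt g a a := by
  simp only [shiftAt, map_mul, map_sub, aeval_X, Matrix.cons_val_zero, Matrix.cons_val_one]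
  ring

theorem homogeneousComponent_multAt_ne_zero {g : MvPolynomial (Fin 2) K} (hg : g ≠ 0)
    (a b : K) : homogeneousComponent (multAt g a b) (shiftAt g a b) ≠ 0 := by
  refine Nat.sInf_mem (s := {n | homogeneousComponent n (shiftAt g a b) ≠ 0}) ?_
  by_contra! hall
  apply shiftAt_ne_zero hg a b
  rw [← sum_homogeneousComponent (shiftAt g a b)]
  exact Finset.sum_eq_zero fun n _ => not_not.mp (Set.eq_empty_iff_forall_notMem.mp hall n)

end Shift

theorem fpoly_ne_zero (p : ℕ) [Fact p.Prime] {m : ℕ} (hm : 2 ≤ m) (hm1 : m ≡ 1 [MOD p]) :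
    fpoly p m ≠ 0 := by
  intro hz
  have hev := congrArg (aeval (![Polynomial.X, 0] : Fin 2 → Polynomial (ZMod p))) hz
  rw [fpoly] at hev
  simp only [map_add, map_sub, map_pow, map_one, aeval_X, Matrix.cons_val_zero,
    Matrix.cons_val_one, map_zero, zero_add, one_pow,
    zero_pow (show m ≠ 0 by omega), add_zero] at hev
  have hco := congrArg (fun q => Polynomial.coeff q (m - 1)) hev
  simp only [Polynomial.coeff_sub, Polynomial.coeff_X_add_one_pow, Polynomial.coeff_X_pow,
    Polynomial.coeff_one, Polynomial.coeff_zero,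
    if_neg (show ¬ (m - 1 = m) by omega), if_neg (show ¬ (m - 1 = 0) by omega),
    sub_zero] at hco
  rw [Nat.choose_symm (by omega : 1 ≤ m), Nat.choose_one_right,
    (ZMod.natCast_eq_natCast_iff _ _ _).mpr hm1, Nat.cast_one] at hco
  exact one_ne_zero hco

theorem toK_injective (p : ℕ) [Fact p.Prime] : Function.Injective (toK p) :=
  map_injective _ (algebraMap (ZMod p) (AlgebraicClosure (ZMod p))).injective

theorem homogeneousComponent_shiftAt_toK_fpoly (p : ℕ) [Fact p.Prime] (m : ℕ)
    (c : AlgebraicClosure (ZMod p)) (n : ℕ) :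
    homogeneousComponent n (shiftAt (toK p (fpoly p m)) c c) =
      C (m.choose n * ((c + 1) ^ (m - n) - c ^ (m - n))) * (X 0 ^ n - X 1 ^ n) := by
  have hshift : shiftAt (toK p (fpoly p m)) c c =
      (X 0 + C (c + 1)) ^ m - (X 0 + C c) ^ m - (X 1 + C (c + 1)) ^ m + (X 1 + C c) ^ m := by
    simp only [fpoly, toK, shiftAt, map_add, map_sub, map_pow, map_one, MvPolynomial.map_X,
      aeval_X, Matrix.cons_val_zero, Matrix.cons_val_one]
    ring
  rw [hshift, map_add, map_sub, map_sub]
  simp only [homogeneousComponent_X_add_C_pow, C_mul, C_sub]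
  ring

theorem stmt13_general (p : ℕ) [Fact p.Prime]
    (m : ℕ) (hm : 3 ≤ m) (hm1 : m ≡ 1 [MOD p])
    (h : MvPolynomial (Fin 2) (ZMod p))
    (hfh : fpoly p m = (X 0 - X 1) * h)
    (x0 : AlgebraicClosure (ZMod p)) :
    homogeneousComponent (multAt (toK p h) x0 x0 + 1) (shiftAt (toK p (fpoly p m)) x0 x0) =
      (X 0 - X 1) *
        homogeneousComponent (multAt (toK p h) x0 x0) (shiftAt (toK p h) x0 x0) ∧
    homogeneousComponent (multAt (toK p h) x0 x0 + 2) (shiftAt (toK p (fpoly p m)) x0 x0) =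
      (X 0 - X 1) *
        homogeneousComponent (multAt (toK p h) x0 x0 + 1) (shiftAt (toK p h) x0 x0) ∧
    (∃ a : AlgebraicClosure (ZMod p),
      homogeneousComponent (multAt (toK p h) x0 x0 + 1) (shiftAt (toK p (fpoly p m)) x0 x0) =
        C a * (X 0 ^ (multAt (toK p h) x0 x0 + 1) - X 1 ^ (multAt (toK p h) x0 x0 + 1))) ∧
    (∀ q : MvPolynomial (Fin 2) (AlgebraicClosure (ZMod p)), q ≠ 0 → q.IsHomogeneous 1 →
      q ∣ homogeneousComponent (multAt (toK p h) x0 x0) (shiftAt (toK p h) x0 x0) →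
      q ∣ ∑ i ∈ Finset.range (multAt (toK p h) x0 x0 + 1),
            X 0 ^ i * X 1 ^ (multAt (toK p h) x0 x0 - i)) := by
  set μ := multAt (toK p h) x0 x0
  have hF : shiftAt (toK p (fpoly p m)) x0 x0 = (X 0 - X 1) * shiftAt (toK p h) x0 x0 := by
    rw [hfh, toK, map_mul, map_sub, map_X, map_X, ← toK, shiftAt_X_sub_X_mul]
  have hcomp (n : ℕ) := homogeneousComponent_add_mul_of_isHomogeneous
    ((isHomogeneous_X _ 0).sub (isHomogeneous_X _ 1)) (shiftAt (toK p h) x0 x0) n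
  have hF₁ : homogeneousComponent (μ + 1) (shiftAt (toK p (fpoly p m)) x0 x0) =
      (X 0 - X 1) * homogeneousComponent μ (shiftAt (toK p h) x0 x0) := by
    rw [hF, add_comm, hcomp]
  have hF₂ : homogeneousComponent (μ + 2) (shiftAt (toK p (fpoly p m)) x0 x0) =
      (X 0 - X 1) * homogeneousComponent (μ + 1) (shiftAt (toK p h) x0 x0) := by
    rw [hF, show μ + 2 = 1 + (μ + 1) by omega, hcomp]
  have hF₁' := homogeneousComponent_shiftAt_toK_fpoly p m x0 (μ + 1)
  refine ⟨hF₁, hF₂, ⟨_, hF₁'⟩, fun q _ _ hq => ?_⟩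
  have hH : homogeneousComponent μ (shiftAt (toK p h) x0 x0) = C _ * _ :=
    eq_C_mul_geom_sum_of_X_sub_X_mul_eq zero_ne_one (hF₁.symm.trans hF₁')
  have hh : toK p h ≠ 0 := fun hz => fpoly_ne_zero p (by omega) hm1 <| by
    rw [hfh, toK_injective p (hz.trans (map_zero _).symm), mul_zero]
  have hne := homogeneousComponent_multAt_ne_zero hh x0 x0
  rw [hH] at hq hne
  exact (IsUnit.dvd_mul_left ((ne_zero_of_map (left_ne_zero_of_mul hne)).isUnit.map C)).mp hq

/-- Let `t = (x₀,x₀)` be a singular point of `h` on the diagonal with multiplicity `μ`, and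
let `H_j`, `F_j` be the degree-`j` homogeneous components of `h(X+x₀, Y+x₀)` and
`f(X+x₀, Y+x₀)`.  Then `F_{μ+1} = (X-Y)·H_μ`, `F_{μ+2} = (X-Y)·H_{μ+1}`, there is `a` with
`F_{μ+1} = a·(X^{μ+1} - Y^{μ+1})`, and every (nonzero homogeneous) linear factor of `H_μ`
divides `(X^{μ+1} - Y^{μ+1})/(X-Y) = Σ_{i=0}^{μ} X^i Y^{μ-i}`. -/
theorem stmt13 (p : ℕ) [Fact p.Prime] (hp : Odd p)
    (m : ℕ) (hm : 3 ≤ m) (hm1 : m ≡ 1 [MOD p])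
    (h : MvPolynomial (Fin 2) (ZMod p))
    (hfh : fpoly p m = (X 0 - X 1) * h)
    (x0 : AlgebraicClosure (ZMod p))
    (hsing : IsSingAt (toK p h) x0 x0) :
    homogeneousComponent (multAt (toK p h) x0 x0 + 1) (shiftAt (toK p (fpoly p m)) x0 x0) =
      (X 0 - X 1) *
        homogeneousComponent (multAt (toK p h) x0 x0) (shiftAt (toK p h) x0 x0) ∧
    homogeneousComponent (multAt (toK p h) x0 x0 + 2) (shiftAt (toK p (fpoly p m)) x0 x0) =
      (X 0 - X 1) *
        homogeneousComponent (multAt (toK p h) x0 x0 + 1) (shiftAt (toK p h) x0 x0) ∧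
    (∃ a : AlgebraicClosure (ZMod p),
      homogeneousComponent (multAt (toK p h) x0 x0 + 1) (shiftAt (toK p (fpoly p m)) x0 x0) =
        C a * (X 0 ^ (multAt (toK p h) x0 x0 + 1) - X 1 ^ (multAt (toK p h) x0 x0 + 1))) ∧
    (∀ q : MvPolynomial (Fin 2) (AlgebraicClosure (ZMod p)), q ≠ 0 → q.IsHomogeneous 1 →
      q ∣ homogeneousComponent (multAt (toK p h) x0 x0) (shiftAt (toK p h) x0 x0) →
      q ∣ ∑ i ∈ Finset.range (multAt (toK p h) x0 x0 + 1),
            X 0 ^ i * X 1 ^ (multAt (toK p h) x0 x0 - i)) :=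
  stmt13_general p m hm hm1 h hfh x0
end

section
/- Let m ≥ 3 with m not divisible by p and m ≢ 1 (mod p), and let K be an algebraic closure of F_p. Then the singular points of h in K² are exactly the points (x₀,y₀) with x₀ ≠ y₀ and (x₀+1)^{m−1} = (y₀+1)^{m−1} = x₀^{m−1} = y₀^{m−1}, and each such point has multiplicity m_t(h) = 2; moreover the projective closure of the curve h = 0 has no singular point on the line at infinity. -/
/-! Write `φ(t) = (t+1)^m - t^m`, so that `f = φ(x) - φ(y) = (x - y) h`. By the product rule a
singular point of `h` is one of `f`, i.e. `φ'(a) = φ'(b) = 0` and `φ(a) = φ(b)`, and off the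
diagonal the converse holds. At a singular point of `h` moreover `f_xx = (a - b) h_xx`, while
`f_xx = φ''(a) ≠ 0`, since `φ'(a) = φ''(a) = 0` would give both `(a+1)^{m-2} = a^{m-2}` and
`(a+1)^{m-1} = a^{m-1}`. Hence `a ≠ b` and `h_xx ≠ 0`, so the multiplicity is exactly `2`.

Dehomogenization is injective on forms of a fixed degree, so the homogenization `ĥ` satisfies
`z (x - y) ĥ = (x+z)^m - x^m - (y+z)^m + y^m`. In the chart `y = 1`, if `ĥ` and `ĥ_z` vanished at
`(ω, 0)`, the first two `z`-derivatives of this identity would give `ω^{m-1} = ω^{m-2} = 1`, so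
`ω = 1`, and then the mixed derivative gives `m (m - 1) = 0`. In the chart `x = 1` the
`z`-derivative gives `ĥ(0, 0) = m ≠ 0`. -/

open MvPolynomial

section Multiplicity

variable {K : Type*} [CommRing K] (g : MvPolynomial (Fin 2) K) (a b : K)

lemma coeff_zero_shiftAt : coeff 0 (shiftAt g a b) = eval ![a, b] g := by
  rw [← constantCoeff_eq, shiftAt, map_aeval]
  congr 1
  ext i
  · simp
  · fin_cases i <;> simp

lemma pderiv_shiftAt (i : Fin 2) : pderiv i (shiftAt g a b) = shiftAt (pderiv i g) a b := by
  unfold shiftAt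
  induction g using MvPolynomial.induction_on with
  | C c => simp
  | add p q hp hq => simp only [map_add, hp, hq]
  | mul_X p j hp =>
    simp only [map_mul, aeval_X, pderiv_mul, map_add, pderiv_X, pderiv_C, add_zero, hp]
    rcases eq_or_ne i j with rfl | hij
    · simp
    · simp [Pi.single_eq_of_ne (Ne.symm hij)]

lemma coeff_single_one_shiftAt (i : Fin 2) :
    coeff (Finsupp.single i 1) (shiftAt g a b) = eval ![a, b] (pderiv i g) := by
  rw [← coeff_zero_shiftAt, ← pderiv_shiftAt, coeff_pderiv]
  simp

lemma two_mul_coeff_single_two_shiftAt :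
    2 * coeff (Finsupp.single 0 2) (shiftAt g a b) = eval ![a, b] (pderiv 0 (pderiv 0 g)) := by
  rw [← coeff_zero_shiftAt, ← pderiv_shiftAt, ← pderiv_shiftAt, coeff_pderiv, coeff_pderiv]
  simp [← Finsupp.single_add]
  ring

lemma homogeneousComponent_zero_shiftAt :
    homogeneousComponent 0 (shiftAt g a b) = C (eval ![a, b] g) := by
  rw [homogeneousComponent_zero, coeff_zero_shiftAt]

lemma homogeneousComponent_one_shiftAt_eq_zero_iff :
    homogeneousComponent 1 (shiftAt g a b) = 0 ↔
      eval ![a, b] (pderiv 0 g) = 0 ∧ eval ![a, b] (pderiv 1 g) = 0 := by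
  have coeff_single (i : Fin 2) :
      coeff (Finsupp.single i 1) (homogeneousComponent 1 (shiftAt g a b)) =
        eval ![a, b] (pderiv i g) := by
    rw [coeff_homogeneousComponent, if_pos (Finsupp.degree_single i 1), coeff_single_one_shiftAt]
  refine ⟨fun h => ?_, fun ⟨h0, h1⟩ => ?_⟩
  · simp only [← coeff_single, h, coeff_zero, and_self]
  · ext d
    rw [coeff_zero, coeff_homogeneousComponent]
    split_ifs with hd
    · rw [Finsupp.degree_eq_sum, Fin.sum_univ_two] at hd
      obtain rfl | rfl : d = Finsupp.single 0 1 ∨ d = Finsupp.single 1 1 := by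
        rcases Nat.eq_zero_or_pos (d 0) with hd0 | hd0
        · right; ext j; fin_cases j <;> simp <;> omega
        · left; ext j; fin_cases j <;> simp <;> omega
      · rw [coeff_single_one_shiftAt, h0]
      · rw [coeff_single_one_shiftAt, h1]
    · rfl

lemma isSingAt_iff_homogeneousComponent_shiftAt_eq_zero :
    IsSingAt g a b ↔ homogeneousComponent 0 (shiftAt g a b) = 0 ∧
      homogeneousComponent 1 (shiftAt g a b) = 0 := by
  rw [IsSingAt, homogeneousComponent_one_shiftAt_eq_zero_iff, homogeneousComponent_zero_shiftAt,
    C_eq_zero]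

variable {g a b}

lemma IsSingAt.of_two_le_multAt (h : 2 ≤ multAt g a b) : IsSingAt g a b := by
  have vanish (n : ℕ) (hn : n < 2) : homogeneousComponent n (shiftAt g a b) = 0 := by
    by_contra hne
    have : multAt g a b ≤ n := Nat.sInf_le hne
    omega
  exact (isSingAt_iff_homogeneousComponent_shiftAt_eq_zero g a b).mpr
    ⟨vanish 0 (by norm_num), vanish 1 (by norm_num)⟩

lemma IsSingAt.multAt_eq_two (hs : IsSingAt g a b)
    (hxx : eval ![a, b] (pderiv 0 (pderiv 0 g)) ≠ 0) : multAt g a b = 2 := by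
  obtain ⟨h0, h1⟩ := (isSingAt_iff_homogeneousComponent_shiftAt_eq_zero g a b).mp hs
  refine IsLeast.csInf_eq ⟨fun h2 => hxx ?_, fun n hn => ?_⟩
  · have := coeff_homogeneousComponent (n := 2) (φ := shiftAt g a b) (Finsupp.single 0 2)
    rw [if_pos (Finsupp.degree_single 0 2), h2, coeff_zero] at this
    rw [← two_mul_coeff_single_two_shiftAt, ← this, mul_zero]
  · by_contra hlt
    interval_cases n
    · exact hn h0
    · exact hn h1

end Multiplicity

section Dehomogenization

variable {R : Type*} [CommRing R]

lemma aeval_X_X_one_monomial (v : Fin 3 →₀ ℕ) (c : R) :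
    aeval ![(X 0 : MvPolynomial (Fin 2) R), X 1, 1] (monomial v c) =
      monomial (Finsupp.single 0 (v 0) + Finsupp.single 1 (v 1)) c := by
  rw [aeval_monomial, monomial_eq, Finsupp.prod_fintype _ _ (fun _ => pow_zero _),
    Finsupp.prod_fintype _ _ (fun _ => pow_zero _), Fin.prod_univ_three, Fin.prod_univ_two]
  simp [algebraMap_eq]

lemma MvPolynomial.IsHomogeneous.coeff_aeval_X_X_one {n : ℕ} {P : MvPolynomial (Fin 3) R}
    (hP : P.IsHomogeneous n) {u : Fin 3 →₀ ℕ} (hu : u.degree = n) :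
    coeff (Finsupp.single 0 (u 0) + Finsupp.single 1 (u 1))
      (MvPolynomial.aeval ![(X 0 : MvPolynomial (Fin 2) R), X 1, 1] P) = coeff u P := by
  conv_lhs => rw [P.as_sum, map_sum, coeff_sum]
  simp only [aeval_X_X_one_monomial, coeff_monomial]
  rw [Finset.sum_eq_single u (fun v hv hvu => if_neg fun hvu' => hvu ?_)
    (fun hu' => by rw [if_pos rfl, notMem_support_iff.mp hu']), if_pos rfl]
  have hv0 := DFunLike.congr_fun hvu' 0
  have hv1 := DFunLike.congr_fun hvu' 1
  simp only [Finsupp.add_apply, Finsupp.single_apply] at hv0 hv1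
  norm_num at hv0 hv1
  have hvdeg : v.degree = n := by
    by_contra hne
    exact mem_support_iff.mp hv (hP.coeff_eq_zero hne)
  rw [Finsupp.degree_eq_sum, Fin.sum_univ_three] at hvdeg hu
  ext j
  fin_cases j <;> simp <;> omega

lemma MvPolynomial.IsHomogeneous.eq_of_aeval_X_X_one_eq {n : ℕ} {P Q : MvPolynomial (Fin 3) R}
    (hP : P.IsHomogeneous n) (hQ : Q.IsHomogeneous n)
    (h : MvPolynomial.aeval ![(X 0 : MvPolynomial (Fin 2) R), X 1, 1] P =
      MvPolynomial.aeval ![(X 0 : MvPolynomial (Fin 2) R), X 1, 1] Q) : P = Q := by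
  ext u
  by_cases hu : u.degree = n
  · rw [← hP.coeff_aeval_X_X_one hu, ← hQ.coeff_aeval_X_X_one hu, h]
  · rw [hP.coeff_eq_zero hu, hQ.coeff_eq_zero hu]

end Dehomogenization

noncomputable def powDiff (R : Type*) [CommRing R] (m : ℕ) : MvPolynomial (Fin 2) R :=
  (X 0 + 1) ^ m - X 0 ^ m - (X 1 + 1) ^ m + X 1 ^ m

section PowDiff

variable {K : Type*} [CommRing K] (a b : K) (n : ℕ)

lemma eval_powDiff :
    eval ![a, b] (powDiff K n) = ((a + 1) ^ n - a ^ n) - ((b + 1) ^ n - b ^ n) := by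
  simp [powDiff]; ring

lemma eval_pderiv_zero_powDiff :
    eval ![a, b] (pderiv 0 (powDiff K (n + 1))) = (n + 1) * ((a + 1) ^ n - a ^ n) := by
  simp [powDiff]; ring

lemma eval_pderiv_one_powDiff :
    eval ![a, b] (pderiv 1 (powDiff K (n + 1))) = -((n + 1) * ((b + 1) ^ n - b ^ n)) := by
  simp [powDiff]; ring

lemma eval_pderiv_zero_pderiv_zero_powDiff :
    eval ![a, b] (pderiv 0 (pderiv 0 (powDiff K (n + 2)))) =
      (n + 2) * (n + 1) * ((a + 1) ^ n - a ^ n) := by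
  simp [powDiff, -Nat.cast_add, Derivation.map_natCast]
  push_cast
  ring

end PowDiff

section ProductRule

variable {K : Type*} [CommRing K] {H : MvPolynomial (Fin 2) K} {a b : K}

lemma eval_X_sub_X_mul : eval ![a, b] ((X 0 - X 1) * H) = (a - b) * eval ![a, b] H := by
  simp

lemma eval_pderiv_zero_X_sub_X_mul :
    eval ![a, b] (pderiv 0 ((X 0 - X 1) * H)) =
      eval ![a, b] H + (a - b) * eval ![a, b] (pderiv 0 H) := by
  simp; ring

lemma eval_pderiv_one_X_sub_X_mul :
    eval ![a, b] (pderiv 1 ((X 0 - X 1) * H)) =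
      -eval ![a, b] H + (a - b) * eval ![a, b] (pderiv 1 H) := by
  simp; ring

lemma eval_pderiv_zero_pderiv_zero_X_sub_X_mul :
    eval ![a, b] (pderiv 0 (pderiv 0 ((X 0 - X 1) * H))) =
      2 * eval ![a, b] (pderiv 0 H) + (a - b) * eval ![a, b] (pderiv 0 (pderiv 0 H)) := by
  simp; ring

lemma IsSingAt.X_sub_X_mul (hH : IsSingAt H a b) : IsSingAt ((X 0 - X 1) * H) a b := by
  obtain ⟨h0, h1, h2⟩ := hH
  refine ⟨?_, ?_, ?_⟩ <;>
    simp only [eval_X_sub_X_mul, eval_pderiv_zero_X_sub_X_mul, eval_pderiv_one_X_sub_X_mul,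
      h0, h1, h2, mul_zero, add_zero, neg_zero]

end ProductRule

section Singularities

variable {K : Type*} [CommRing K] [IsDomain K] {n : ℕ} {H : MvPolynomial (Fin 2) K} {a b : K}

lemma add_one_pow_succ_ne_of_add_one_pow_eq {x : K} (h : (x + 1) ^ n = x ^ n) :
    (x + 1) ^ (n + 1) ≠ x ^ (n + 1) := by
  intro h'
  have hxn : x ^ n = 0 := by linear_combination h' - (x + 1) * h
  obtain rfl := (pow_eq_zero_iff'.mp hxn).1
  rw [zero_add, one_pow, hxn] at h
  exact one_ne_zero h

lemma isSingAt_powDiff_iff (hn : ((n + 1 : ℕ) : K) ≠ 0) :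
    IsSingAt (powDiff K (n + 1)) a b ↔
      (a + 1) ^ n = a ^ n ∧ (b + 1) ^ n = b ^ n ∧ a ^ n = b ^ n := by
  push_cast at hn
  simp only [IsSingAt, eval_powDiff, eval_pderiv_zero_powDiff, eval_pderiv_one_powDiff,
    neg_eq_zero, mul_eq_zero, hn, false_or, sub_eq_zero]
  constructor
  · rintro ⟨hab, ha, hb⟩
    refine ⟨ha, hb, ?_⟩
    linear_combination hab - (a + 1) * ha + (b + 1) * hb
  · rintro ⟨ha, hb, hab⟩
    refine ⟨?_, ha, hb⟩
    rw [pow_succ, pow_succ, pow_succ, pow_succ, ha, hb]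
    linear_combination hab

lemma isSingAt_X_sub_X_mul_iff (hab : a ≠ b) :
    IsSingAt ((X 0 - X 1) * H) a b ↔ IsSingAt H a b := by
  refine ⟨fun ⟨h0, h1, h2⟩ => ?_, IsSingAt.X_sub_X_mul⟩
  have hab' : a - b ≠ 0 := sub_ne_zero.mpr hab
  rw [eval_X_sub_X_mul, mul_eq_zero, or_iff_right hab'] at h0
  rw [eval_pderiv_zero_X_sub_X_mul, h0, zero_add, mul_eq_zero, or_iff_right hab'] at h1
  rw [eval_pderiv_one_X_sub_X_mul, h0, neg_zero, zero_add, mul_eq_zero, or_iff_right hab'] at h2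
  exact ⟨h0, h1, h2⟩

lemma IsSingAt.sub_mul_eval_pderiv_pderiv_ne_zero (hn₂ : ((n + 2 : ℕ) : K) ≠ 0)
    (hn₁ : ((n + 1 : ℕ) : K) ≠ 0) (hFH : powDiff K (n + 2) = (X 0 - X 1) * H)
    (hs : IsSingAt H a b) : (a - b) * eval ![a, b] (pderiv 0 (pderiv 0 H)) ≠ 0 := by
  have hF : IsSingAt (powDiff K (n + 2)) a b := hFH ▸ hs.X_sub_X_mul
  obtain ⟨ha, -, -⟩ := (isSingAt_powDiff_iff hn₂).mp hF
  have hxx := eval_pderiv_zero_pderiv_zero_powDiff a b n (K := K)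
  rw [hFH, eval_pderiv_zero_pderiv_zero_X_sub_X_mul, hs.2.1, mul_zero, zero_add] at hxx
  rw [hxx]
  push_cast at hn₂ hn₁
  exact mul_ne_zero (mul_ne_zero hn₂ hn₁) (sub_ne_zero.mpr fun h =>
    add_one_pow_succ_ne_of_add_one_pow_eq h ha)

theorem isSingAt_iff_of_powDiff_eq (hn₂ : ((n + 2 : ℕ) : K) ≠ 0)
    (hn₁ : ((n + 1 : ℕ) : K) ≠ 0) (hFH : powDiff K (n + 2) = (X 0 - X 1) * H) :
    IsSingAt H a b ↔ a ≠ b ∧ (a + 1) ^ (n + 1) = (b + 1) ^ (n + 1) ∧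
      (b + 1) ^ (n + 1) = a ^ (n + 1) ∧ a ^ (n + 1) = b ^ (n + 1) := by
  constructor
  · intro hs
    have hab : a ≠ b := sub_ne_zero.mp (left_ne_zero_of_mul
      (hs.sub_mul_eval_pderiv_pderiv_ne_zero hn₂ hn₁ hFH))
    obtain ⟨ha, hb, hab'⟩ := (isSingAt_powDiff_iff hn₂).mp (hFH ▸ hs.X_sub_X_mul)
    exact ⟨hab, by rw [ha, hab', hb], by rw [hb, hab'], hab'⟩
  · rintro ⟨hab, h1, h2, h3⟩
    rw [← isSingAt_X_sub_X_mul_iff hab, ← hFH, isSingAt_powDiff_iff hn₂]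
    exact ⟨h1.trans h2, h2.trans h3, h3⟩

theorem IsSingAt.multAt_eq_two_of_powDiff_eq (hn₂ : ((n + 2 : ℕ) : K) ≠ 0)
    (hn₁ : ((n + 1 : ℕ) : K) ≠ 0) (hFH : powDiff K (n + 2) = (X 0 - X 1) * H)
    (hs : IsSingAt H a b) : multAt H a b = 2 :=
  hs.multAt_eq_two (right_ne_zero_of_mul (hs.sub_mul_eval_pderiv_pderiv_ne_zero hn₂ hn₁ hFH))

end Singularities

section Homogenization

variable {R : Type*} [CommRing R] {n : ℕ} {H : MvPolynomial (Fin 2) R}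
  {Ĥ : MvPolynomial (Fin 3) R}

lemma X_mul_X_sub_X_mul_eq_of_powDiff_eq (hĤ : Ĥ.IsHomogeneous n)
    (hdeh : aeval ![(X 0 : MvPolynomial (Fin 2) R), X 1, 1] Ĥ = H)
    (hFH : powDiff R (n + 2) = (X 0 - X 1) * H) :
    X 2 * (X 0 - X 1) * Ĥ =
      (X 0 + X 2) ^ (n + 2) - X 0 ^ (n + 2) - (X 1 + X 2) ^ (n + 2) + X 1 ^ (n + 2) := by
  have hX (i : Fin 3) : (X i : MvPolynomial (Fin 3) R).IsHomogeneous 1 := isHomogeneous_X R i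
  refine IsHomogeneous.eq_of_aeval_X_X_one_eq (n := n + 2) ?_ ?_ ?_
  · convert ((hX 2).mul ((hX 0).sub (hX 1))).mul hĤ using 1
    ring
  · have hpow (P : MvPolynomial (Fin 3) R) (hP : P.IsHomogeneous 1) :
        (P ^ (n + 2)).IsHomogeneous (n + 2) := by simpa using hP.pow (n + 2)
    exact (((hpow _ ((hX 0).add (hX 2))).sub (hpow _ (hX 0))).sub
      (hpow _ ((hX 1).add (hX 2)))).add (hpow _ (hX 1))
  · simp only [map_mul, map_sub, map_add, map_pow, aeval_X, Matrix.cons_val, one_mul, hdeh,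
      ← hFH, powDiff]

variable {K : Type*} [CommRing K] (φ : R →+* K)

lemma X_mul_X_sub_one_mul_map_aeval_eq
    (hB : X 2 * (X 0 - X 1) * Ĥ =
      (X 0 + X 2) ^ (n + 2) - X 0 ^ (n + 2) - (X 1 + X 2) ^ (n + 2) + X 1 ^ (n + 2)) :
    X 1 * (X 0 - 1) * map φ (aeval ![(X 0 : MvPolynomial (Fin 2) R), 1, X 1] Ĥ) =
      (X 0 + X 1) ^ (n + 2) - X 0 ^ (n + 2) - (X 1 + 1) ^ (n + 2) + 1 := by
  have := congrArg (fun P => map φ (aeval ![(X 0 : MvPolynomial (Fin 2) R), 1, X 1] P)) hB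
  simp only [map_mul, map_sub, map_add, map_pow, map_one, aeval_X, MvPolynomial.map_X,
    Matrix.cons_val] at this
  linear_combination this

lemma X_mul_one_sub_X_mul_map_aeval_eq
    (hB : X 2 * (X 0 - X 1) * Ĥ =
      (X 0 + X 2) ^ (n + 2) - X 0 ^ (n + 2) - (X 1 + X 2) ^ (n + 2) + X 1 ^ (n + 2)) :
    X 1 * (1 - X 0) * map φ (aeval ![1, (X 0 : MvPolynomial (Fin 2) R), X 1] Ĥ) =
      (X 1 + 1) ^ (n + 2) - 1 - (X 0 + X 1) ^ (n + 2) + X 0 ^ (n + 2) := by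
  have := congrArg (fun P => map φ (aeval ![1, (X 0 : MvPolynomial (Fin 2) R), X 1] P)) hB
  simp only [map_mul, map_sub, map_add, map_pow, map_one, aeval_X, MvPolynomial.map_X,
    Matrix.cons_val] at this
  linear_combination this

end Homogenization

section Charts

variable {K : Type*} [CommRing K] {n : ℕ} {Q : MvPolynomial (Fin 2) K}

lemma not_isSingAt_of_X_mul_X_sub_one_mul_eq [IsDomain K] (hn₂ : ((n + 2 : ℕ) : K) ≠ 0)
    (hn₁ : ((n + 1 : ℕ) : K) ≠ 0)
    (hQ : X 1 * (X 0 - 1) * Q = (X 0 + X 1) ^ (n + 2) - X 0 ^ (n + 2) - (X 1 + 1) ^ (n + 2) + 1)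
    (ω : K) : ¬ IsSingAt Q ω 0 := by
  rintro ⟨hQ0, -, hQz⟩
  have hz := congrArg (fun P => eval ![ω, 0] (pderiv 1 P)) hQ
  have hzz := congrArg (fun P => eval ![ω, 0] (pderiv 1 (pderiv 1 P))) hQ
  simp [hQ0, hQz, -Nat.cast_add, Derivation.map_natCast] at hz hzz
  have hω₁ : ω ^ (n + 1) = 1 := by
    have : ((n + 2 : ℕ) : K) * (ω ^ (n + 1) - 1) = 0 := by linear_combination -hz
    exact sub_eq_zero.mp ((mul_eq_zero.mp this).resolve_left hn₂)
  have hω : ω ^ n = 1 := by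
    have : ((n + 2 : ℕ) : K) * ((n + 1 : ℕ) : K) * (ω ^ n - 1) = 0 := by
      linear_combination -hzz
    exact sub_eq_zero.mp ((mul_eq_zero.mp this).resolve_left (mul_ne_zero hn₂ hn₁))
  obtain rfl : ω = 1 := by rwa [pow_succ, hω, one_mul] at hω₁
  have hxz := congrArg (fun P => eval ![1, 0] (pderiv 0 (pderiv 1 P))) hQ
  simp [hQ0, -Nat.cast_add, Derivation.map_natCast] at hxz
  exact hxz.elim hn₂ hn₁

lemma not_isSingAt_zero_of_X_mul_one_sub_X_mul_eq (hn₂ : ((n + 2 : ℕ) : K) ≠ 0)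
    (hQ : X 1 * (1 - X 0) * Q = (X 1 + 1) ^ (n + 2) - 1 - (X 0 + X 1) ^ (n + 2) + X 0 ^ (n + 2)) :
    ¬ IsSingAt Q 0 0 := by
  rintro ⟨hQ0, -, -⟩
  have hz := congrArg (fun P => eval ![0, 0] (pderiv 1 P)) hQ
  simp [hQ0, -Nat.cast_add] at hz
  exact hn₂ hz.symm

end Charts

theorem stmt18_general (p : ℕ) [Fact p.Prime]
    (m : ℕ) (hpm : ¬ p ∣ m) (hm1 : ¬ m ≡ 1 [MOD p])
    (h : MvPolynomial (Fin 2) (ZMod p))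
    (hfh : fpoly p m = (X 0 - X 1) * h)
    (hhat : MvPolynomial (Fin 3) (ZMod p))
    (hhom : hhat.IsHomogeneous (m - 2))
    (hdeh : aeval ![(X 0 : MvPolynomial (Fin 2) (ZMod p)), X 1, 1] hhat = h) :
    (∀ x0 y0 : AlgebraicClosure (ZMod p),
      IsSingAt (toK p h) x0 y0 ↔
        (x0 ≠ y0 ∧ (x0 + 1) ^ (m - 1) = (y0 + 1) ^ (m - 1) ∧
          (y0 + 1) ^ (m - 1) = x0 ^ (m - 1) ∧ x0 ^ (m - 1) = y0 ^ (m - 1))) ∧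
    (∀ x0 y0 : AlgebraicClosure (ZMod p),
      IsSingAt (toK p h) x0 y0 → multAt (toK p h) x0 y0 = 2) ∧
    (∀ ω : AlgebraicClosure (ZMod p),
      ¬ 2 ≤ multAt (toK p (aeval ![(X 0 : MvPolynomial (Fin 2) (ZMod p)), 1, X 1] hhat)) ω 0) ∧
    ¬ 2 ≤ multAt (toK p (aeval ![1, (X 0 : MvPolynomial (Fin 2) (ZMod p)), X 1] hhat)) 0 0 := by
  obtain ⟨n, rfl⟩ : ∃ n, m = n + 2 := by
    have : m ≠ 0 := by rintro rfl; exact hpm (dvd_zero p)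
    have : m ≠ 1 := by rintro rfl; exact hm1 rfl
    exact ⟨m - 2, by omega⟩
  set K := AlgebraicClosure (ZMod p)
  have hn₂ : ((n + 2 : ℕ) : K) ≠ 0 := by rwa [Ne, CharP.cast_eq_zero_iff K p]
  have hn₁ : ((n + 1 : ℕ) : K) ≠ 0 := by
    rw [Ne, CharP.cast_eq_zero_iff K p]
    exact fun hdvd => hm1 ((Nat.modEq_iff_dvd' (by omega)).mpr hdvd).symm
  have hFH : powDiff K (n + 2) = (X 0 - X 1) * toK p h := by
    simpa [toK, fpoly, powDiff] using congrArg (map (algebraMap (ZMod p) K)) hfh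
  have hB := X_mul_X_sub_X_mul_eq_of_powDiff_eq hhom hdeh hfh
  refine ⟨fun a b => isSingAt_iff_of_powDiff_eq hn₂ hn₁ hFH,
    fun a b hs => hs.multAt_eq_two_of_powDiff_eq hn₂ hn₁ hFH, fun ω h2 => ?_, fun h2 => ?_⟩
  · exact not_isSingAt_of_X_mul_X_sub_one_mul_eq hn₂ hn₁
      (X_mul_X_sub_one_mul_map_aeval_eq _ hB) ω (IsSingAt.of_two_le_multAt h2)
  · exact not_isSingAt_zero_of_X_mul_one_sub_X_mul_eq hn₂
      (X_mul_one_sub_X_mul_map_aeval_eq _ hB) (IsSingAt.of_two_le_multAt h2)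

/-- Let `m ≥ 3` with `p ∤ m` and `m ≢ 1 (mod p)`.  The singular points of `h` over the
algebraic closure `K` are exactly the points `(x₀,y₀)` with `x₀ ≠ y₀` and
`(x₀+1)^{m-1} = (y₀+1)^{m-1} = x₀^{m-1} = y₀^{m-1}`, each of multiplicity `2`; and the
projective closure of `h = 0` has no singular point on the line at infinity (neither at a
point `(ω : 1 : 0)` — chart `y = 1`, dehomogenization `ĥ(x,1,z)` at `(ω,0)` — nor at
`(1 : 0 : 0)` — chart `x = 1`, dehomogenization `ĥ(1,y,z)` at `(0,0)`). -/
theorem stmt18 (p : ℕ) [Fact p.Prime] (hp : Odd p)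
    (m : ℕ) (hm : 3 ≤ m) (hpm : ¬ p ∣ m) (hm1 : ¬ m ≡ 1 [MOD p])
    (h : MvPolynomial (Fin 2) (ZMod p))
    (hfh : fpoly p m = (X 0 - X 1) * h)
    (hhat : MvPolynomial (Fin 3) (ZMod p))
    (hhom : hhat.IsHomogeneous (m - 2))
    (hdeh : aeval ![(X 0 : MvPolynomial (Fin 2) (ZMod p)), X 1, 1] hhat = h) :
    (∀ x0 y0 : AlgebraicClosure (ZMod p),
      IsSingAt (toK p h) x0 y0 ↔
        (x0 ≠ y0 ∧ (x0 + 1) ^ (m - 1) = (y0 + 1) ^ (m - 1) ∧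
          (y0 + 1) ^ (m - 1) = x0 ^ (m - 1) ∧ x0 ^ (m - 1) = y0 ^ (m - 1))) ∧
    (∀ x0 y0 : AlgebraicClosure (ZMod p),
      IsSingAt (toK p h) x0 y0 → multAt (toK p h) x0 y0 = 2) ∧
    (∀ ω : AlgebraicClosure (ZMod p),
      ¬ 2 ≤ multAt (toK p (aeval ![(X 0 : MvPolynomial (Fin 2) (ZMod p)), 1, X 1] hhat)) ω 0) ∧
    ¬ 2 ≤ multAt (toK p (aeval ![1, (X 0 : MvPolynomial (Fin 2) (ZMod p)), X 1] hhat)) 0 0 :=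
  stmt18_general p m hpm hm1 h hfh hhat hhom hdeh
end
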